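/- arXiv:1804.07842 — 3 statements merged into one kernel-verified Lean document; each statement's English description precedes it below -/
import Mathlib

section
/- Let V be a finite set, r ∈ ℕ, L ≥ 2r a real, and let y be a nonnegative real-valued function on {S ⊆ V : |S| ≤ r} such that y_S ≥ L · y_{S∪{i}} for every S ⊆ V and i ∈ V∖S with |S| + 1 ≤ r. Then for all S, T ⊆ V with S ∩ T = ∅ and |S| + |T| ≤ r, we have y_S ≥ Σ_{J⊆T} (−1)^{|J|} y_{S∪J} ≥ y_S / 2. -/
/-!
Peeling off one element `t` of `T` splits the alternating sum as
`A(S, T ∪ {t}) = A(S, T) - A(S ∪ {t}, T)`. By induction on `T`, the subtracted term lies between `0`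
and `y (S ∪ {t}) ≤ y S / L`, which gives `(1 - |T| / L) * y S ≤ A(S, T) ≤ y S`;
`|T| ≤ r ≤ L / 2` then yields the lower bound `y S / 2`.
-/

open Finset

section AlternatingSum

variable {V : Type*} [DecidableEq V]

def altSum (y : Finset V → ℝ) (S T : Finset V) : ℝ :=
  ∑ J ∈ T.powerset, (-1 : ℝ) ^ J.card * y (S ∪ J)

@[simp]
lemma altSum_empty (y : Finset V → ℝ) (S : Finset V) : altSum y S ∅ = y S := by
  simp [altSum]

lemma altSum_insert (y : Finset V → ℝ) (S : Finset V) {T : Finset V} {t : V} (ht : t ∉ T) :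
    altSum y S (insert t T) = altSum y S T - altSum y (insert t S) T := by
  rw [altSum, sum_powerset_insert ht, sub_eq_add_neg, altSum, altSum, ← sum_neg_distrib]
  congr 1
  refine sum_congr rfl fun J hJ => ?_
  have htJ : t ∉ J := fun h => ht (mem_powerset.mp hJ h)
  rw [card_insert_of_notMem htJ, pow_succ, union_insert, insert_union]
  ring

theorem altSum_bounds {r : ℕ} {L : ℝ} {y : Finset V → ℝ}
    (hy0 : ∀ S : Finset V, S.card ≤ r → 0 ≤ y S)
    (hdecay : ∀ S : Finset V, ∀ i ∉ S, S.card + 1 ≤ r → L * y (insert i S) ≤ y S)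
    (T : Finset V) :
    ∀ S : Finset V, Disjoint S T → S.card + T.card ≤ r → (T.card : ℝ) ≤ L →
      (1 - T.card / L) * y S ≤ altSum y S T ∧ altSum y S T ≤ y S := by
  induction T using Finset.induction_on with
  | empty => simp
  | @insert t T ht ih =>
    intro S hST hcard hTL
    rw [card_insert_of_notMem ht] at hcard hTL ⊢
    push_cast at hTL ⊢
    have hL : 0 < L := by linarith [T.card.cast_nonneg (α := ℝ)]
    have htS : t ∉ S := fun h => disjoint_left.mp hST h (mem_insert_self t T)
    have hST' : Disjoint S T := hST.mono_right (subset_insert t T)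
    have hcard_tS : (insert t S).card = S.card + 1 := card_insert_of_notMem htS
    obtain ⟨lowS, upS⟩ := ih S hST' (by omega) (by linarith)
    obtain ⟨lowtS, uptS⟩ :=
      ih (insert t S) (disjoint_insert_left.mpr ⟨ht, hST'⟩) (by omega) (by linarith)
    have hytS : 0 ≤ y (insert t S) := hy0 _ (by omega)
    rw [altSum_insert y S ht]
    constructor
    · have hdec : y (insert t S) ≤ y S / L := by
        rw [le_div_iff₀ hL, mul_comm]
        exact hdecay S t htS (by omega)
      have hsplit : (1 - (T.card + 1) / L) * y S = (1 - T.card / L) * y S - y S / L := by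
        ring
      linarith
    · have hfactor : 0 ≤ 1 - T.card / L := by
        rw [sub_nonneg, div_le_one hL]
        linarith
      linarith [le_trans (mul_nonneg hfactor hytS) lowtS]

end AlternatingSum

theorem stmt7_general {V : Type*} [DecidableEq V] (r : ℕ) (L : ℝ)
    (hL : (2 * r : ℝ) ≤ L)
    (y : Finset V → ℝ)
    (hy0 : ∀ S : Finset V, S.card ≤ r → 0 ≤ y S)
    (hmono : ∀ S : Finset V, ∀ i ∉ S, S.card + 1 ≤ r → L * y (insert i S) ≤ y S) :
    ∀ S T : Finset V, Disjoint S T → S.card + T.card ≤ r →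
      (y S / 2 ≤ ∑ J ∈ T.powerset, (-1 : ℝ) ^ J.card * y (S ∪ J)) ∧
      (∑ J ∈ T.powerset, (-1 : ℝ) ^ J.card * y (S ∪ J) ≤ y S) := by
  intro S T hST hcard
  have hTr : (T.card : ℝ) ≤ r := by exact_mod_cast (by omega : T.card ≤ r)
  have hTL : (T.card : ℝ) ≤ 1 / 2 * L := by linarith
  obtain ⟨low, up⟩ :=
    altSum_bounds hy0 hmono T S hST hcard (by linarith [T.card.cast_nonneg (α := ℝ)])
  have hhalf : 1 / 2 ≤ 1 - T.card / L := by
    linarith [div_le_of_le_mul₀ (by linarith) (by norm_num) hTL]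
  refine ⟨le_trans ?_ low, up⟩
  linarith [mul_le_mul_of_nonneg_right hhalf (hy0 S (by omega))]

theorem stmt7 {V : Type*} [Fintype V] [DecidableEq V] (r : ℕ) (L : ℝ)
    (hL : (2 * r : ℝ) ≤ L)
    (y : Finset V → ℝ)
    (hy0 : ∀ S : Finset V, S.card ≤ r → 0 ≤ y S)
    (hmono : ∀ S : Finset V, ∀ i ∉ S, S.card + 1 ≤ r → L * y (insert i S) ≤ y S) :
    ∀ S T : Finset V, Disjoint S T → S.card + T.card ≤ r →
      (y S / 2 ≤ ∑ J ∈ T.powerset, (-1 : ℝ) ^ J.card * y (S ∪ J)) ∧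
      (∑ J ∈ T.powerset, (-1 : ℝ) ^ J.card * y (S ∪ J) ≤ y S) :=
  stmt7_general r L hL y hy0 hmono
end

section
/- Let G be a c-uniform hypergraph on V = {1,…,n}, let α̃ ≥ 0 and τ ∈ ℕ, and let S ⊆ V with |S| ≤ τ. Suppose every set in 𝒮'(S) has size at most τ/10. Then 𝒮'(S) is union closed: for all S₁, S₂ ∈ 𝒮'(S), also S₁ ∪ S₂ ∈ 𝒮'(S). -/
/-!
Φ is supermodular: the edges inside `S₁` or inside `S₂` all lie inside `S₁ ∪ S₂`, and those
inside both are exactly the edges inside `S₁ ∩ S₂`, while `|S|` is modular. Hence for two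
maximisers `S₁, S₂`, `2Φ° = Φ(S₁) + Φ(S₂) ≤ Φ(S₁ ∪ S₂) + Φ(S₁ ∩ S₂) ≤ 2Φ°` as soon as both
`S₁ ∪ S₂` and `S₁ ∩ S₂` are candidate sets, which forces `Φ(S₁ ∪ S₂) = Φ°`. The intersection
is always a candidate set, and the size bound `τ/10` on maximisers makes the union one too.
-/

open Finset

/-- Φ(S) = α̃ |E(S)| − |S|, where E(S) is the set of hyperedges of `G` contained in `S`. -/
noncomputable def Phi (n : ℕ) (G : Finset (Finset (Fin n))) (αt : ℝ)
    (S : Finset (Fin n)) : ℝ :=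
  αt * ((G.filter fun e => e ⊆ S).card : ℝ) - S.card

/-- Φ°(S): the maximum of Φ over candidate sets `S'` for `S` (sets with
`S ⊆ S'` and `|S'| ≤ τ`). -/
noncomputable def PhiOpt (n : ℕ) (G : Finset (Finset (Fin n))) (αt : ℝ) (τ : ℕ)
    (S : Finset (Fin n)) : ℝ :=
  sSup {x : ℝ | ∃ S' : Finset (Fin n), S ⊆ S' ∧ S'.card ≤ τ ∧ x = Phi n G αt S'}

/-- 𝒮'(S): the collection of candidate sets for `S` attaining `Φ°(S)`. -/
def OptSets (n : ℕ) (G : Finset (Finset (Fin n))) (αt : ℝ) (τ : ℕ)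
    (S : Finset (Fin n)) : Set (Finset (Fin n)) :=
  {S' | S ⊆ S' ∧ S'.card ≤ τ ∧ Phi n G αt S' = PhiOpt n G αt τ S}

theorem card_filter_subset_add_card_filter_subset_le {α : Type*} [DecidableEq α]
    (G : Finset (Finset α)) (A B : Finset α) :
    #{e ∈ G | e ⊆ A} + #{e ∈ G | e ⊆ B} ≤ #{e ∈ G | e ⊆ A ∪ B} + #{e ∈ G | e ⊆ A ∩ B} := by
  have hunion : {e ∈ G | e ⊆ A} ∪ {e ∈ G | e ⊆ B} ⊆ {e ∈ G | e ⊆ A ∪ B} := by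
    intro e he
    simp only [mem_union, mem_filter] at he ⊢
    rcases he with ⟨heG, heA⟩ | ⟨heG, heB⟩
    · exact ⟨heG, heA.trans subset_union_left⟩
    · exact ⟨heG, heB.trans subset_union_right⟩
  have hinter : {e ∈ G | e ⊆ A} ∩ {e ∈ G | e ⊆ B} = {e ∈ G | e ⊆ A ∩ B} := by
    rw [← filter_and]
    simp only [subset_inter_iff]
  rw [← card_union_add_card_inter, hinter]
  gcongr

theorem Phi_add_Phi_le_Phi_union_add_Phi_inter {n : ℕ} (G : Finset (Finset (Fin n)))
    {αt : ℝ} (hαt : 0 ≤ αt) (S₁ S₂ : Finset (Fin n)) :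
    Phi n G αt S₁ + Phi n G αt S₂ ≤ Phi n G αt (S₁ ∪ S₂) + Phi n G αt (S₁ ∩ S₂) := by
  have hedges : (#{e ∈ G | e ⊆ S₁} : ℝ) + #{e ∈ G | e ⊆ S₂} ≤
      #{e ∈ G | e ⊆ S₁ ∪ S₂} + #{e ∈ G | e ⊆ S₁ ∩ S₂} := by
    exact_mod_cast card_filter_subset_add_card_filter_subset_le G S₁ S₂
  have hvertices : (#(S₁ ∪ S₂) : ℝ) + #(S₁ ∩ S₂) = #S₁ + #S₂ := by
    exact_mod_cast card_union_add_card_inter S₁ S₂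
  unfold Phi
  nlinarith [mul_le_mul_of_nonneg_left hedges hαt]

theorem Phi_le_PhiOpt {n : ℕ} (G : Finset (Finset (Fin n))) (αt : ℝ) {τ : ℕ}
    {S T : Finset (Fin n)} (hST : S ⊆ T) (hT : #T ≤ τ) :
    Phi n G αt T ≤ PhiOpt n G αt τ S := by
  refine le_csSup ?_ ⟨T, hST, hT, rfl⟩
  refine (Set.finite_range (Phi n G αt)).subset ?_ |>.bddAbove
  rintro x ⟨T', -, -, rfl⟩
  exact ⟨T', rfl⟩

theorem union_mem_OptSets {n : ℕ} {G : Finset (Finset (Fin n))} {αt : ℝ} (hαt : 0 ≤ αt)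
    {τ : ℕ} {S S₁ S₂ : Finset (Fin n)} (h₁ : S₁ ∈ OptSets n G αt τ S)
    (h₂ : S₂ ∈ OptSets n G αt τ S) (hcard : #(S₁ ∪ S₂) ≤ τ) :
    S₁ ∪ S₂ ∈ OptSets n G αt τ S := by
  obtain ⟨hS₁, hcard₁, hopt₁⟩ := h₁
  obtain ⟨hS₂, -, hopt₂⟩ := h₂
  have hSunion : S ⊆ S₁ ∪ S₂ := hS₁.trans subset_union_left
  have hunion := Phi_le_PhiOpt G αt hSunion hcard
  have hinter := Phi_le_PhiOpt G αt (subset_inter hS₁ hS₂)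
    ((card_le_card inter_subset_left).trans hcard₁)
  have hsuper := Phi_add_Phi_le_Phi_union_add_Phi_inter G hαt S₁ S₂
  exact ⟨hSunion, hcard, by linarith⟩

theorem stmt11_general (n : ℕ) (G : Finset (Finset (Fin n)))
    (αt : ℝ) (hαt : 0 ≤ αt) (τ : ℕ) (S : Finset (Fin n))
    (hsize : ∀ S' ∈ OptSets n G αt τ S, (S'.card : ℝ) ≤ (τ : ℝ) / 10) :
    ∀ S₁ ∈ OptSets n G αt τ S, ∀ S₂ ∈ OptSets n G αt τ S,
      S₁ ∪ S₂ ∈ OptSets n G αt τ S := by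
  intro S₁ h₁ S₂ h₂
  refine union_mem_OptSets hαt h₁ h₂ ?_
  have hsum : (#S₁ : ℝ) + #S₂ ≤ τ := by
    linarith [hsize S₁ h₁, hsize S₂ h₂, (Nat.cast_nonneg τ : (0 : ℝ) ≤ τ)]
  exact (card_union_le S₁ S₂).trans (by exact_mod_cast hsum)

theorem stmt11 (n c : ℕ) (G : Finset (Finset (Fin n))) (hG : ∀ e ∈ G, e.card = c)
    (αt : ℝ) (hαt : 0 ≤ αt) (τ : ℕ) (S : Finset (Fin n)) (hS : S.card ≤ τ)
    (hsize : ∀ S' ∈ OptSets n G αt τ S, (S'.card : ℝ) ≤ (τ : ℝ) / 10) :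
    ∀ S₁ ∈ OptSets n G αt τ S, ∀ S₂ ∈ OptSets n G αt τ S,
      S₁ ∪ S₂ ∈ OptSets n G αt τ S :=
  stmt11_general n G αt hαt τ S hsize
end

section
/- Let G be a c-uniform hypergraph on V = {1,…,n}, let α̃ > 0 and τ ∈ ℕ, let S ⊆ V with |S| + 1 ≤ τ, and suppose that for every i ∈ V, every set in 𝒮'(S ∪ {i}) has size at most τ/10. Write S^i_max = S'_max(S ∪ {i}). Then for every i ∈ V such that some hyperedge of E(S^i_max) contains i, every vertex j ∈ S^i_max ∖ S is contained in some hyperedge of E(S^i_max); that is, no vertex outside of S is isolated in the subhypergraph E(S^i_max). -/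
/-!
Removing from a set `T` a vertex that lies in no hyperedge of `E(T)` keeps `E(T)` and
shrinks `T`, so it raises `Φ` by one. Hence in an optimal candidate set `T` for `A` every
vertex of `T ∖ A` lies in a hyperedge of `E(T)`. Every vertex `j` of `S'_max(A)` lies in
some optimal `T ⊆ S'_max(A)`, so for `j ∉ A = S ∪ {i}` the hyperedge found in `E(T)` is one of
`E(S'_max(A))`; the vertex `i` itself is covered by hypothesis.
-/

open Finset
open scoped Classical

/-- S'_max(S): the union of all sets in 𝒮'(S). -/
noncomputable def Smax (n : ℕ) (G : Finset (Finset (Fin n))) (αt : ℝ) (τ : ℕ)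
    (S : Finset (Fin n)) : Finset (Fin n) :=
  (Finset.univ.filter fun S' => S' ∈ OptSets n G αt τ S).sup id

section

variable {n : ℕ} {G : Finset (Finset (Fin n))} {αt : ℝ} {τ : ℕ} {A T : Finset (Fin n)}

lemma phi_le_phiOpt {S' : Finset (Fin n)} (hAS' : A ⊆ S') (hS' : S'.card ≤ τ) :
    Phi n G αt S' ≤ PhiOpt n G αt τ A := by
  refine le_csSup ((Set.finite_range (Phi n G αt)).subset ?_).bddAbove ⟨S', hAS', hS', rfl⟩
  rintro _ ⟨S'', -, -, rfl⟩
  exact ⟨S'', rfl⟩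

lemma phi_erase_of_forall_notMem {j : Fin n} (hj : j ∈ T)
    (hiso : ∀ e ∈ G.filter fun e => e ⊆ T, j ∉ e) :
    Phi n G αt (T.erase j) = Phi n G αt T + 1 := by
  have hE : (G.filter fun e => e ⊆ T.erase j) = G.filter fun e => e ⊆ T := by
    refine filter_congr fun e he => ⟨fun h => h.trans (erase_subset j T), fun h => ?_⟩
    exact subset_erase.mpr ⟨h, hiso e (mem_filter.mpr ⟨he, h⟩)⟩
  have hcard : ((T.erase j).card : ℝ) = T.card - 1 := by
    rw [card_erase_of_mem hj, Nat.cast_sub (card_pos.mpr ⟨j, hj⟩), Nat.cast_one]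
  simp only [Phi, hE, hcard]
  ring

lemma exists_mem_edge_of_mem_optSets {j : Fin n} (hT : T ∈ OptSets n G αt τ A)
    (hjT : j ∈ T) (hjA : j ∉ A) : ∃ e ∈ G.filter fun e => e ⊆ T, j ∈ e := by
  obtain ⟨hAT, hTτ, hTopt⟩ := hT
  by_contra! hiso
  have hle : Phi n G αt (T.erase j) ≤ PhiOpt n G αt τ A :=
    phi_le_phiOpt (subset_erase.mpr ⟨hAT, hjA⟩) ((card_erase_le).trans hTτ)
  rw [phi_erase_of_forall_notMem hjT hiso, hTopt] at hle
  linarith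

lemma subset_smax (hT : T ∈ OptSets n G αt τ A) : T ⊆ Smax n G αt τ A :=
  le_sup (f := id) (mem_filter.mpr ⟨mem_univ T, hT⟩)

lemma exists_mem_optSets_of_mem_smax {j : Fin n} (hj : j ∈ Smax n G αt τ A) :
    ∃ T ∈ OptSets n G αt τ A, j ∈ T := by
  obtain ⟨T, hT, hjT⟩ := mem_sup.mp hj
  exact ⟨T, (mem_filter.mp hT).2, hjT⟩

lemma exists_mem_edge_of_mem_smax {j : Fin n} (hj : j ∈ Smax n G αt τ A) (hjA : j ∉ A) :
    ∃ e ∈ G.filter fun e => e ⊆ Smax n G αt τ A, j ∈ e := by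
  obtain ⟨T, hT, hjT⟩ := exists_mem_optSets_of_mem_smax hj
  obtain ⟨e, he, hje⟩ := exists_mem_edge_of_mem_optSets hT hjT hjA
  rw [mem_filter] at he
  exact ⟨e, mem_filter.mpr ⟨he.1, he.2.trans (subset_smax hT)⟩, hje⟩

end

theorem stmt14_general (n : ℕ) (G : Finset (Finset (Fin n)))
    (αt : ℝ) (τ : ℕ) (S : Finset (Fin n)) :
    ∀ i : Fin n,
      -- some hyperedge of E(S^i_max) contains i
      (∃ e ∈ G.filter fun e => e ⊆ Smax n G αt τ (insert i S), i ∈ e) →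
      -- then no vertex outside of S is isolated in E(S^i_max)
      ∀ j ∈ Smax n G αt τ (insert i S) \ S,
        ∃ e ∈ G.filter fun e => e ⊆ Smax n G αt τ (insert i S), j ∈ e := by
  intro i hi j hj
  obtain ⟨hjmax, hjS⟩ := mem_sdiff.mp hj
  by_cases hji : j = i
  · exact hji ▸ hi
  · exact exists_mem_edge_of_mem_smax hjmax (by simp [hji, hjS])

theorem stmt14 (n c : ℕ) (G : Finset (Finset (Fin n))) (hG : ∀ e ∈ G, e.card = c)
    (αt : ℝ) (hαt : 0 < αt) (τ : ℕ) (S : Finset (Fin n)) (hS : S.card + 1 ≤ τ)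
    (h2 : ∀ i : Fin n, ∀ S' ∈ OptSets n G αt τ (insert i S),
      (S'.card : ℝ) ≤ (τ : ℝ) / 10) :
    ∀ i : Fin n,
      -- some hyperedge of E(S^i_max) contains i
      (∃ e ∈ G.filter fun e => e ⊆ Smax n G αt τ (insert i S), i ∈ e) →
      -- then no vertex outside of S is isolated in E(S^i_max)
      ∀ j ∈ Smax n G αt τ (insert i S) \ S,
        ∃ e ∈ G.filter fun e => e ⊆ Smax n G αt τ (insert i S), j ∈ e :=
  stmt14_general n G αt τ S
end
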